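/- Uniformly for w in [1 + (log n)²/n, 2], c_n(w)/a_n(w) = n²·(1 + O(1/(log n)²)) as n → ∞; in particular sqrt(c_n(w)/a_n(w)) = n·(1 + O(1/(log n)²)). -/

import Mathlib

open Finset Real

noncomputable def aa (n : ℕ) (w : ℝ) : ℝ := ∑ j ∈ Finset.range (n+1), w ^ j
noncomputable def bb (n : ℕ) (w : ℝ) : ℝ := ∑ j ∈ Finset.range (n+1), (j : ℝ) * w ^ j
noncomputable def cc (n : ℕ) (w : ℝ) : ℝ := ∑ j ∈ Finset.range (n+1), (j : ℝ)^2 * w ^ j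

/-! Since `n² - j² ≤ 2n (n - j)` for `j ≤ n`, the gap `n² a_n - c_n` is at most `2n ∑ (n - j) w^j`,
and telescoping gives `(w - 1) ∑ (n - j) w^j = a_n - (n + 1) ≤ a_n`. Hence
`0 ≤ n² - c_n/a_n ≤ 2n/(w - 1) ≤ 2n²/(log n)²` as soon as `w - 1 ≥ (log n)²/n`, and the square
root inherits the bound divided by `n`. -/

theorem sub_one_mul_sum_range_sub_mul_pow {R : Type*} [CommRing R] (n : ℕ) (w : R) :
    (w - 1) * ∑ j ∈ range (n + 1), ((n : R) - j) * w ^ j = ∑ j ∈ range (n + 1), w ^ j - (n + 1) := by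
  induction n with
  | zero => simp
  | succ n ih =>
    have hsplit : ∑ j ∈ range (n + 1), (((n + 1 : ℕ) : R) - j) * w ^ j
        = ∑ j ∈ range (n + 1), ((n : R) - j) * w ^ j + ∑ j ∈ range (n + 1), w ^ j := by
      rw [← sum_add_distrib]
      exact sum_congr rfl fun j _ => by push_cast; ring
    rw [sum_range_succ _ (n + 1), sub_self, zero_mul, add_zero, hsplit, mul_add, ih,
      mul_comm (w - 1), geom_sum_mul, sum_range_succ (fun j => w ^ j) (n + 1)]
    push_cast
    ring

theorem aa_pos (n : ℕ) {w : ℝ} (hw : 0 ≤ w) : 0 < aa n w :=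
  sum_pos' (fun j _ => pow_nonneg hw j) ⟨0, by simp⟩

theorem cc_nonneg (n : ℕ) {w : ℝ} (hw : 0 ≤ w) : 0 ≤ cc n w :=
  sum_nonneg fun j _ => by positivity

theorem cc_le_sq_mul_aa (n : ℕ) {w : ℝ} (hw : 0 ≤ w) : cc n w ≤ (n : ℝ) ^ 2 * aa n w := by
  rw [cc, aa, mul_sum]
  refine sum_le_sum fun j hj => mul_le_mul_of_nonneg_right ?_ (pow_nonneg hw j)
  have hjn : (j : ℝ) ≤ n := by exact_mod_cast Nat.lt_succ_iff.mp (mem_range.mp hj)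
  gcongr

theorem sub_one_mul_sq_mul_aa_sub_cc_le (n : ℕ) {w : ℝ} (hw : 1 ≤ w) :
    (w - 1) * ((n : ℝ) ^ 2 * aa n w - cc n w) ≤ 2 * n * aa n w := by
  have hgap : (n : ℝ) ^ 2 * aa n w - cc n w ≤ 2 * n * ∑ j ∈ range (n + 1), ((n : ℝ) - j) * w ^ j := by
    rw [aa, cc, mul_sum, mul_sum, ← sum_sub_distrib]
    refine sum_le_sum fun j hj => ?_
    have hjn : (j : ℝ) ≤ n := by exact_mod_cast Nat.lt_succ_iff.mp (mem_range.mp hj)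
    have hwj : 0 ≤ w ^ j := pow_nonneg (by linarith) j
    nlinarith [mul_nonneg (mul_nonneg (sub_nonneg.mpr hjn) (sub_nonneg.mpr hjn)) hwj]
  calc (w - 1) * ((n : ℝ) ^ 2 * aa n w - cc n w)
      ≤ (w - 1) * (2 * n * ∑ j ∈ range (n + 1), ((n : ℝ) - j) * w ^ j) :=
        mul_le_mul_of_nonneg_left hgap (by linarith)
    _ = 2 * n * (aa n w - (n + 1)) := by
        rw [mul_left_comm, sub_one_mul_sum_range_sub_mul_pow, aa]
    _ ≤ 2 * n * aa n w := by
        have : (0 : ℝ) ≤ n := n.cast_nonneg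
        nlinarith

theorem cc_div_aa_le_sq (n : ℕ) {w : ℝ} (hw : 0 ≤ w) : cc n w / aa n w ≤ (n : ℝ) ^ 2 :=
  (div_le_iff₀ (aa_pos n hw)).mpr (cc_le_sq_mul_aa n hw)

theorem sq_sub_cc_div_aa_le (n : ℕ) {w : ℝ} (hw : 1 < w) :
    (n : ℝ) ^ 2 - cc n w / aa n w ≤ 2 * n / (w - 1) := by
  have ha := aa_pos n (by linarith : (0 : ℝ) ≤ w)
  rw [le_div_iff₀ (by linarith), ← mul_div_cancel_right₀ ((n : ℝ) ^ 2) ha.ne', ← sub_div,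
    div_mul_eq_mul_div, div_le_iff₀ ha, mul_comm]
  exact sub_one_mul_sq_mul_aa_sub_cc_le n hw.le

theorem abs_sqrt_sub_le {x y : ℝ} (hx : 0 ≤ x) (hy : 0 < y) (hxy : x ≤ y ^ 2) :
    |√x - y| ≤ (y ^ 2 - x) / y := by
  have hs : √x ≤ y := Real.sqrt_le_iff.mpr ⟨hy.le, hxy⟩
  rw [abs_of_nonpos (by linarith), le_div_iff₀ hy]
  nlinarith [Real.mul_self_sqrt hx, Real.sqrt_nonneg x]

theorem stmt13 : ∃ C : ℝ, 0 < C ∧ ∃ N : ℕ, ∀ n : ℕ, N ≤ n →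
    ∀ w ∈ Set.Icc (1 + (Real.log n)^2 / n) (2 : ℝ),
      |cc n w / aa n w - (n : ℝ)^2| ≤ C * (n : ℝ)^2 / (Real.log n)^2 ∧
      |Real.sqrt (cc n w / aa n w) - (n : ℝ)| ≤ C * (n : ℝ) / (Real.log n)^2 := by
  refine ⟨2, two_pos, 2, fun n hn w ⟨hwl, _⟩ => ?_⟩
  have hn1 : (1 : ℝ) < n := by exact_mod_cast hn
  have hL : 0 < Real.log n := Real.log_pos hn1
  have hw : 1 < w := by
    have : 0 < Real.log n ^ 2 / n := by positivity
    linarith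
  have hw0 : 0 ≤ w := by linarith
  have hgap : 2 * n / (w - 1) ≤ 2 * (n : ℝ) ^ 2 / Real.log n ^ 2 := by
    rw [div_le_div_iff₀ (by linarith) (by positivity)]
    have : Real.log n ^ 2 ≤ n * (w - 1) := by
      rw [← div_le_iff₀' (by linarith)]; linarith
    nlinarith
  have hx0 := div_nonneg (cc_nonneg n hw0) (aa_pos n hw0).le
  have hxn := cc_div_aa_le_sq n hw0
  have hdiff := (sq_sub_cc_div_aa_le n hw).trans hgap
  refine ⟨?_, ?_⟩
  · rw [abs_sub_comm, abs_of_nonneg (by linarith)]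
    exact hdiff
  · calc |√(cc n w / aa n w) - n| ≤ ((n : ℝ) ^ 2 - cc n w / aa n w) / n :=
          abs_sqrt_sub_le hx0 (by linarith) hxn
      _ ≤ 2 * (n : ℝ) ^ 2 / Real.log n ^ 2 / n := by gcongr
      _ = 2 * n / Real.log n ^ 2 := by field_simp
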